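/- arXiv:1705.08574 — 10 statements merged into one kernel-verified Lean document; each statement's English description precedes it below -/
import Mathlib

section
/- For any proper subdomain D of ℝⁿ and points x, y ∈ D, one has 2·j_D(x,y) ≤ u_D(x,y) ≤ 4·j_D(x,y), with equality in the first inequality when d(x) = d(y). -/
/-!
Put `a = d(x)`, `b = d(y)`, `t = |x - y|`, `M = max a b`, `m = min a b`. Then
`2 j = log ((a + t)(b + t) / ab)` and `u = log ((t + M)² / ab)`. The left inequality is
`(a + t)(b + t) ≤ (t + M)²`, with equality when `a = b`. Since `(a + t)(b + t) = (M + t)(m + t)`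
and `ab = Mm`, the right one reduces to `Mm ≤ (m + t)²`, which holds because `d` is
1-Lipschitz, so `M ≤ m + t`.
-/

open Metric Real

lemma infDist_frontier_pos {X : Type*} [PseudoMetricSpace X] [PreconnectedSpace X] {D : Set X}
    (hD : IsOpen D) (hD_ne_univ : D ≠ Set.univ) {x : X} (hx : x ∈ D) :
    0 < infDist x (frontier D) :=
  (isClosed_frontier.notMem_iff_infDist_pos (nonempty_frontier_iff.2 ⟨⟨x, hx⟩, hD_ne_univ⟩)).1
    fun hfr => (disjoint_frontier_iff_isOpen.2 hD).notMem_of_mem_left hfr hx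

lemma abs_infDist_sub_infDist_le {X : Type*} [PseudoMetricSpace X] (s : Set X) (x y : X) :
    |infDist x s - infDist y s| ≤ dist x y := by
  simpa [← Real.dist_eq] using (lipschitz_infDist_pt s).dist_le_mul x y

section DistanceRatio

variable {a b t : ℝ}

lemma one_add_div_mul_one_add_div (ha : a ≠ 0) (hb : b ≠ 0) :
    (1 + t / a) * (1 + t / b) = (a + t) * (b + t) / (a * b) := by
  field_simp

lemma two_mul_log_eq_log_sq (x : ℝ) : 2 * log x = log (x ^ 2) := by
  rw [log_pow]
  norm_num

lemma two_mul_log_div_sqrt (c : ℝ) {p : ℝ} (hp : 0 ≤ p) :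
    2 * log (c / √p) = log (c ^ 2 / p) := by
  rw [two_mul_log_eq_log_sq, div_pow, sq_sqrt hp]

lemma add_mul_add_le_sq_add_max (ht : 0 ≤ t) (hb : 0 ≤ b) :
    (a + t) * (b + t) ≤ (t + max a b) ^ 2 := by
  rw [sq]
  exact mul_le_mul (by linarith [le_max_left a b]) (by linarith [le_max_right a b])
    (by positivity) (by positivity)

lemma sq_add_max_mul_le (ht : 0 ≤ t) (ha : 0 ≤ a) (hb : 0 ≤ b) (hab : |a - b| ≤ t) :
    (t + max a b) ^ 2 * (a * b) ≤ ((a + t) * (b + t)) ^ 2 := by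
  have hM : max a b ≤ min a b + t := by linarith [max_sub_min_eq_abs' a b]
  have hMm : max a b * min a b ≤ (min a b + t) ^ 2 := by
    rw [sq]
    exact mul_le_mul hM (by linarith) (le_min ha hb) (by positivity)
  rw [← max_mul_min a b, ← fn_max_mul_fn_min (· + t) a b, mul_pow, add_comm t]
  exact mul_le_mul_of_nonneg_left hMm (sq_nonneg _)

lemma log_one_add_div_mul_le_two_mul_log (ht : 0 ≤ t) (ha : 0 < a) (hb : 0 < b) :
    log ((1 + t / a) * (1 + t / b)) ≤ 2 * log ((t + max a b) / √(a * b)) := by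
  rw [one_add_div_mul_one_add_div ha.ne' hb.ne', two_mul_log_div_sqrt _ (by positivity)]
  exact log_le_log (by positivity) (by gcongr; exact add_mul_add_le_sq_add_max ht hb.le)

lemma two_mul_log_le_two_mul_log_one_add_div_mul (ht : 0 ≤ t) (ha : 0 < a) (hb : 0 < b)
    (hab : |a - b| ≤ t) :
    2 * log ((t + max a b) / √(a * b)) ≤ 2 * log ((1 + t / a) * (1 + t / b)) := by
  rw [one_add_div_mul_one_add_div ha.ne' hb.ne', two_mul_log_div_sqrt _ (by positivity),
    two_mul_log_eq_log_sq]
  have hab' : 0 < a * b := mul_pos ha hb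
  refine log_le_log (by positivity) ?_
  rw [div_pow, div_le_div_iff₀ hab' (by positivity), sq (a * b), ← mul_assoc]
  exact mul_le_mul_of_nonneg_right (sq_add_max_mul_le ht ha.le hb.le hab) hab'.le

lemma two_mul_log_self (ha : 0 < a) :
    2 * log ((t + max a a) / √(a * a)) = log ((1 + t / a) * (1 + t / a)) := by
  rw [two_mul_log_div_sqrt _ (by positivity), max_self]
  congr 1
  field_simp
  ring

end DistanceRatio

theorem stmt0_general {n : ℕ} (D : Set (EuclideanSpace ℝ (Fin n)))
    (hDopen : IsOpen D) (hDproper : D ≠ Set.univ)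
    (d j u : _)
    (hd : d = fun x => Metric.infDist x (frontier D))
    (hj : j = fun x y => (1/2) * Real.log ((1 + dist x y / d x) * (1 + dist x y / d y)))
    (hu : u = fun x y => 2 * Real.log ((dist x y + max (d x) (d y)) / Real.sqrt (d x * d y)))
    (x y : EuclideanSpace ℝ (Fin n)) (hx : x ∈ D) (hy : y ∈ D) :
    2 * j x y ≤ u x y ∧ u x y ≤ 4 * j x y ∧ (d x = d y → u x y = 2 * j x y) := by
  subst hd hj hu
  have ht : 0 ≤ dist x y := dist_nonneg
  have hdx := infDist_frontier_pos hDopen hDproper hx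
  have hdy := infDist_frontier_pos hDopen hDproper hy
  have hleft := log_one_add_div_mul_le_two_mul_log ht hdx hdy
  have hright := two_mul_log_le_two_mul_log_one_add_div_mul ht hdx hdy
    (abs_infDist_sub_infDist_le (frontier D) x y)
  refine ⟨by linarith, by linarith, fun hxy => ?_⟩
  beta_reduce at hxy ⊢
  rw [hxy]
  linarith [two_mul_log_self (t := dist x y) hdy]

/-- For a proper subdomain `D ⊊ ℝⁿ` with `d(x) = dist(x, ∂D)`,
`j_D(x,y) = (1/2)·log((1 + |x−y|/d(x))(1 + |x−y|/d(y)))` and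
`u_D(x,y) = 2·log((|x−y| + max{d(x),d(y)})/√(d(x)d(y)))`, one has
`2 j_D ≤ u_D ≤ 4 j_D`, with equality on the left when `d(x) = d(y)`. -/
theorem stmt0 {n : ℕ} (D : Set (EuclideanSpace ℝ (Fin n)))
    (hDopen : IsOpen D) (hDconn : IsConnected D) (hDproper : D ≠ Set.univ)
    (d j u : _)
    (hd : d = fun x => Metric.infDist x (frontier D))
    (hj : j = fun x y => (1/2) * Real.log ((1 + dist x y / d x) * (1 + dist x y / d y)))
    (hu : u = fun x y => 2 * Real.log ((dist x y + max (d x) (d y)) / Real.sqrt (d x * d y)))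
    (x y : EuclideanSpace ℝ (Fin n)) (hx : x ∈ D) (hy : y ∈ D) :
    2 * j x y ≤ u x y ∧ u x y ≤ 4 * j x y ∧ (d x = d y → u x y = 2 * j x y) :=
  stmt0_general D hDopen hDproper d j u hd hj hu x y hx hy
end

section
/- For all x, y in the unit ball 𝔹ⁿ, (1/2)·ρ_{𝔹ⁿ}(x,y) ≤ u_{𝔹ⁿ}(x,y) ≤ 4·ρ_{𝔹ⁿ}(x,y). -/
/-!
Write `a = 1 - ‖x‖`, `b = 1 - ‖y‖`, `d = ‖x - y‖` and `c = √(ab)`. Since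
`1 - ‖x‖² = a (1 + ‖x‖)`, the quantity `s = sinh (ρ/2)` equals `d / (c k)` with
`k = √((1 + ‖x‖)(1 + ‖y‖)) ∈ [1, 2]`, while `u = 2 log t` with `t = (d + max a b) / c`.
From `c ≤ max a b ≤ c + |a - b| ≤ c + d` one gets `1 + s ≤ t ≤ 1 + 4 s`, and the
elementary bounds `log (1 + s) ≤ arsinh s ≤ log (1 + 2 s)` together with
`1 + 2 s ≤ (1 + s)²` and `1 + 4 s ≤ (1 + s)⁴` turn this into `ρ/2 ≤ u ≤ 4 ρ`.
-/

open Real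

namespace Real

theorem log_one_add_le_arsinh {s : ℝ} (hs : 0 ≤ s) : log (1 + s) ≤ arsinh s := by
  have h : 1 ≤ √(1 + s ^ 2) := one_le_sqrt.2 (by nlinarith)
  exact log_le_log (by linarith) (by linarith)

theorem arsinh_le_log_one_add_two_mul {s : ℝ} (hs : 0 ≤ s) : arsinh s ≤ log (1 + 2 * s) := by
  have h : √(1 + s ^ 2) ≤ 1 + s := sqrt_le_iff.2 ⟨by linarith, by nlinarith⟩
  exact log_le_log (by positivity) (by linarith)

theorem arsinh_le_two_mul_log {s t : ℝ} (hs : 0 ≤ s) (ht : 1 + s ≤ t) :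
    arsinh s ≤ 2 * log t :=
  calc arsinh s ≤ log (1 + 2 * s) := arsinh_le_log_one_add_two_mul hs
    _ ≤ log (t ^ 2) := log_le_log (by positivity) (by nlinarith)
    _ = 2 * log t := by rw [log_pow]; norm_num

theorem log_le_four_mul_arsinh {s t : ℝ} (hs : 0 ≤ s) (ht₀ : 0 < t) (ht : t ≤ 1 + 4 * s) :
    log t ≤ 4 * arsinh s :=
  calc log t ≤ log ((1 + s) ^ 4) := by
        refine log_le_log ht₀ (ht.trans ?_)
        exact_mod_cast one_add_mul_le_pow (by linarith : (-2 : ℝ) ≤ s) 4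
    _ = 4 * log (1 + s) := by rw [log_pow]; norm_num
    _ ≤ 4 * arsinh s := by gcongr; exact log_one_add_le_arsinh hs

theorem min_le_sqrt_mul {a b : ℝ} (ha : 0 ≤ a) (hb : 0 ≤ b) : min a b ≤ √(a * b) :=
  le_sqrt_of_sq_le <| (sq (min a b)).trans_le <|
    mul_le_mul (min_le_left a b) (min_le_right a b) (le_min ha hb) ha

theorem sqrt_mul_le_max {a b : ℝ} (ha : 0 ≤ a) (hb : 0 ≤ b) : √(a * b) ≤ max a b :=
  sqrt_le_iff.2 ⟨le_max_of_le_left ha, (sq (max a b)).trans_ge <|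
    mul_le_mul (le_max_left a b) (le_max_right a b) hb (le_max_of_le_left ha)⟩

theorem max_le_sqrt_mul_add_abs_sub {a b : ℝ} (ha : 0 ≤ a) (hb : 0 ≤ b) :
    max a b ≤ √(a * b) + |a - b| := by
  linarith [min_le_sqrt_mul ha hb, max_sub_min_eq_abs' a b]

end Real

section UnitBall

variable {p q d : ℝ}

theorem sqrt_one_sub_sq_mul_one_sub_sq (hp : p ≤ 1) (hq : q ≤ 1) :
    √((1 - p ^ 2) * (1 - q ^ 2)) = √((1 - p) * (1 - q)) * √((1 + p) * (1 + q)) := by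
  rw [← sqrt_mul (mul_nonneg (by linarith) (by linarith))]
  ring_nf

theorem one_add_div_le_div_sqrt (hp₀ : 0 ≤ p) (hp₁ : p < 1) (hq₀ : 0 ≤ q) (hq₁ : q < 1)
    (hd : 0 ≤ d) :
    1 + d / √((1 - p ^ 2) * (1 - q ^ 2)) ≤ (d + max (1 - p) (1 - q)) / √((1 - p) * (1 - q)) := by
  rw [sqrt_one_sub_sq_mul_one_sub_sq hp₁.le hq₁.le, add_div, add_comm]
  set c := √((1 - p) * (1 - q))
  have hc : 0 < c := sqrt_pos.2 (mul_pos (by linarith) (by linarith))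
  have hk : 1 ≤ √((1 + p) * (1 + q)) := one_le_sqrt.2 (by nlinarith)
  have hcm : c ≤ max (1 - p) (1 - q) := sqrt_mul_le_max (by linarith) (by linarith)
  exact add_le_add (div_le_div_of_nonneg_left hd hc (le_mul_of_one_le_right hc.le hk))
    ((one_le_div hc).2 hcm)

theorem div_sqrt_le_one_add_four_mul (hp₀ : 0 ≤ p) (hp₁ : p < 1) (hq₀ : 0 ≤ q) (hq₁ : q < 1)
    (hpq : |p - q| ≤ d) :
    (d + max (1 - p) (1 - q)) / √((1 - p) * (1 - q)) ≤
      1 + 4 * (d / √((1 - p ^ 2) * (1 - q ^ 2))) := by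
  rw [sqrt_one_sub_sq_mul_one_sub_sq hp₁.le hq₁.le]
  set c := √((1 - p) * (1 - q))
  set k := √((1 + p) * (1 + q))
  have hc : 0 < c := sqrt_pos.2 (mul_pos (by linarith) (by linarith))
  have hk₀ : 0 < k := sqrt_pos.2 (by positivity)
  have hk₂ : k ≤ 2 := sqrt_le_iff.2 ⟨by norm_num, by nlinarith⟩
  have hmax : max (1 - p) (1 - q) ≤ c + d := by
    have := max_le_sqrt_mul_add_abs_sub (a := 1 - p) (b := 1 - q) (by linarith) (by linarith)
    rw [show 1 - p - (1 - q) = q - p by ring, abs_sub_comm] at this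
    linarith
  have hd : 0 ≤ d := (abs_nonneg _).trans hpq
  calc (d + max (1 - p) (1 - q)) / c ≤ (c + 2 * d) / c :=
        div_le_div_of_nonneg_right (by linarith) hc.le
    _ = 1 + 2 * k * (d / (c * k)) := by field_simp
    _ ≤ 1 + 4 * (d / (c * k)) := by gcongr; linarith

end UnitBall

/-- For `x, y` in the unit ball `𝔹ⁿ`, with `ρ` the hyperbolic metric
(characterized by `sinh(ρ(x,y)/2) = |x−y|/√((1−|x|²)(1−|y|²))`) and
`u(x,y) = 2·log((|x−y| + max{1−|x|,1−|y|})/√((1−|x|)(1−|y|)))`,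
one has `(1/2) ρ ≤ u ≤ 4 ρ`. -/
theorem stmt1 {n : ℕ} (ρ u : EuclideanSpace ℝ (Fin n) → EuclideanSpace ℝ (Fin n) → ℝ)
    (hρ : ∀ x ∈ Metric.ball (0 : EuclideanSpace ℝ (Fin n)) 1, ∀ y ∈ Metric.ball (0 : EuclideanSpace ℝ (Fin n)) 1,
      Real.sinh (ρ x y / 2) = dist x y / Real.sqrt ((1 - ‖x‖^2) * (1 - ‖y‖^2)))
    (hu : u = fun x y => 2 * Real.log ((dist x y + max (1 - ‖x‖) (1 - ‖y‖)) / Real.sqrt ((1 - ‖x‖) * (1 - ‖y‖))))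
    (x y : EuclideanSpace ℝ (Fin n))
    (hx : x ∈ Metric.ball (0 : EuclideanSpace ℝ (Fin n)) 1)
    (hy : y ∈ Metric.ball (0 : EuclideanSpace ℝ (Fin n)) 1) :
    (1/2) * ρ x y ≤ u x y ∧ u x y ≤ 4 * ρ x y := by
  have hx₁ : ‖x‖ < 1 := mem_ball_zero_iff.mp hx
  have hy₁ : ‖y‖ < 1 := mem_ball_zero_iff.mp hy
  have hxy : |‖x‖ - ‖y‖| ≤ dist x y := by rw [dist_eq_norm]; exact abs_norm_sub_norm_le x y
  set s := dist x y / √((1 - ‖x‖ ^ 2) * (1 - ‖y‖ ^ 2))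
  set t := (dist x y + max (1 - ‖x‖) (1 - ‖y‖)) / √((1 - ‖x‖) * (1 - ‖y‖))
  have hs : 0 ≤ s := by positivity
  have hst : 1 + s ≤ t := one_add_div_le_div_sqrt (norm_nonneg x) hx₁ (norm_nonneg y) hy₁ dist_nonneg
  have hts : t ≤ 1 + 4 * s := div_sqrt_le_one_add_four_mul (norm_nonneg x) hx₁ (norm_nonneg y) hy₁ hxy
  have hsinh : sinh (ρ x y / 2) = s := hρ x hx y hy
  have hρs : ρ x y = 2 * arsinh s := by rw [← hsinh, arsinh_sinh]; ring
  have hut : u x y = 2 * log t := by rw [hu]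
  rw [hρs, hut]
  constructor
  · linarith [arsinh_le_two_mul_log hs hst]
  · linarith [log_le_four_mul_arsinh hs (by linarith) hts]
end

section
/- For all x, y in the upper half-space ℍⁿ, ρ_{ℍⁿ}(x,y) ≤ u_{ℍⁿ}(x,y). -/
/-!
With `t = (|x−y| + max{xₙ, yₙ}) / √(xₙ yₙ)` we have `2 sinh(log t) = t − t⁻¹`, so by monotonicity
of `sinh` it suffices that `|x−y| / √(xₙ yₙ) ≤ t − t⁻¹`. After clearing denominators this is
`xₙ yₙ ≤ max{xₙ, yₙ} · (|x−y| + max{xₙ, yₙ})`, which holds because `xₙ yₙ ≤ max{xₙ, yₙ}²`.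
-/

open Metric Real

lemma Real.sqrt_mul_le_max_s4 {a b : ℝ} (ha : 0 ≤ a) (hb : 0 ≤ b) : √(a * b) ≤ max a b := by
  rw [Real.sqrt_le_left (ha.trans (le_max_left a b)), sq]
  exact mul_le_mul (le_max_left a b) (le_max_right a b) hb (ha.trans (le_max_left a b))

lemma Real.div_le_two_mul_sinh_log_add_div {d m s : ℝ} (hd : 0 ≤ d) (hs : 0 < s) (hsm : s ≤ m) :
    d / s ≤ 2 * sinh (log ((d + m) / s)) := by
  have hdm : 0 < d + m := by linarith
  rw [Real.sinh_log (div_pos hdm hs), inv_div, mul_div_cancel₀ _ two_ne_zero,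
    div_sub_div _ _ hs.ne' hdm.ne', div_le_div_iff₀ hs (mul_pos hs hdm)]
  nlinarith [mul_le_mul hsm hsm hs.le (hs.le.trans hsm), mul_nonneg hd (hs.le.trans hsm)]

/-- For `x, y` in the upper half-space `ℍⁿ = {x : xₙ > 0}`, with `ρ` the hyperbolic
metric (characterized by `2 sinh(ρ(x,y)/2) = |x−y|/√(xₙ yₙ)`) and
`u(x,y) = 2·log((|x−y| + max{xₙ, yₙ})/√(xₙ yₙ))`, one has `ρ(x,y) ≤ u(x,y)`. -/
theorem stmt4 {n : ℕ}
    (ρ u : EuclideanSpace ℝ (Fin (n+1)) → EuclideanSpace ℝ (Fin (n+1)) → ℝ)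
    (hρ : ∀ x y : EuclideanSpace ℝ (Fin (n+1)), 0 < x (Fin.last n) → 0 < y (Fin.last n) →
      2 * Real.sinh (ρ x y / 2) = dist x y / Real.sqrt (x (Fin.last n) * y (Fin.last n)))
    (hu : u = fun x y => 2 * Real.log
      ((dist x y + max (x (Fin.last n)) (y (Fin.last n))) / Real.sqrt (x (Fin.last n) * y (Fin.last n))))
    (x y : EuclideanSpace ℝ (Fin (n+1)))
    (hx : 0 < x (Fin.last n)) (hy : 0 < y (Fin.last n)) :
    ρ x y ≤ u x y := by
  subst hu
  have hsinh := (hρ x y hx hy).trans_le <| Real.div_le_two_mul_sinh_log_add_div dist_nonneg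
    (Real.sqrt_pos.mpr (mul_pos hx hy)) (Real.sqrt_mul_le_max_s4 hx.le hy.le)
  have := Real.sinh_le_sinh.mp (le_of_mul_le_mul_left hsinh two_pos)
  dsimp only
  linarith
end

section
/- The ratio ρ_{ℍⁿ}(t·e₂, (1/t)·e₂) / u_{ℍⁿ}(t·e₂, (1/t)·e₂) tends to 1 as t → ∞; explicitly ρ_{ℍⁿ}(t·e₂,(1/t)·e₂) = 2·log t and u_{ℍⁿ}(t·e₂,(1/t)·e₂) = 2·log((2t²−1)/t) for t > 1, so the inequality ρ_{ℍⁿ} ≤ u_{ℍⁿ} is sharp. -/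
open Metric Real Filter Topology

/-!
For `t > 1` the points `t e₂` and `t⁻¹ e₂` lie on a common vertical geodesic, at Euclidean
distance `t - t⁻¹` with `√(t · t⁻¹) = 1`. Since `2 sinh (log t) = t - t⁻¹`, this gives
`ρ = 2 log t`, while `u = 2 log (2t - t⁻¹) = 2 log t + 2 log (2 - t⁻²)`. The correction term
stays bounded while `log t → ∞`, so the ratio tends to `1`.
-/

lemma EuclideanSpace.dist_smul_single_one {ι : Type*} [Fintype ι] [DecidableEq ι] (i : ι)
    (a b : ℝ) :
    dist (a • EuclideanSpace.single i (1 : ℝ)) (b • EuclideanSpace.single i 1) = |a - b| := by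
  rw [dist_eq_norm, ← sub_smul, norm_smul, PiLp.norm_single, norm_one, mul_one,
    Real.norm_eq_abs]

lemma eq_two_mul_log_of_two_mul_sinh_half_eq {r t : ℝ} (ht : 0 < t)
    (h : 2 * sinh (r / 2) = t - t⁻¹) : r = 2 * log t := by
  have : sinh (r / 2) = sinh (log t) := by rw [sinh_log ht]; linarith
  linarith [sinh_injective this]

lemma tendsto_self_div_self_add {α : Type*} {l : Filter α} {f g : α → ℝ} {c : ℝ}
    (hf : Tendsto f l atTop) (hg : Tendsto g l (𝓝 c)) :
    Tendsto (fun x => f x / (f x + g x)) l (𝓝 1) := by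
  have hgf : Tendsto (fun x => (1 + g x / f x)⁻¹) l (𝓝 1) := by
    simpa using (tendsto_const_nhds.add (hg.div_atTop hf)).inv₀ (by norm_num : (1 : ℝ) + 0 ≠ 0)
  refine hgf.congr' ?_
  filter_upwards [hf.eventually_gt_atTop 0] with x hx
  field_simp

lemma log_two_mul_sq_sub_one_div {t : ℝ} (ht : 1 < t) :
    log ((2 * t ^ 2 - 1) / t) = log t + log (2 - (t ^ 2)⁻¹) := by
  have ht0 : 0 < t := by linarith
  have hinv : (t ^ 2)⁻¹ < 1 := inv_lt_one_of_one_lt₀ (one_lt_pow₀ ht two_ne_zero)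
  rw [← log_mul ht0.ne' (by linarith)]
  congr 1
  field_simp

lemma tendsto_log_two_sub_inv_sq :
    Tendsto (fun t : ℝ => log (2 - (t ^ 2)⁻¹)) atTop (𝓝 (log 2)) := by
  have h : Tendsto (fun t : ℝ => 2 - (t ^ 2)⁻¹) atTop (𝓝 2) := by
    simpa using tendsto_const_nhds.sub
      (tendsto_inv_atTop_zero.comp (tendsto_pow_atTop (α := ℝ) two_ne_zero))
  exact (continuousAt_log two_ne_zero).tendsto.comp h

/-- Sharpness of `ρ_{ℍ} ≤ u_{ℍ}` in the half-plane `ℍ² = {x ∈ ℝ² : x₂ > 0}`: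
with `e₂` the second standard basis vector, for `t > 1` one has
`ρ(t e₂, (1/t) e₂) = 2 log t` and `u(t e₂, (1/t) e₂) = 2 log((2t² − 1)/t)`,
and the ratio `ρ/u` tends to `1` as `t → ∞`. -/
theorem stmt5
    (ρ u : EuclideanSpace ℝ (Fin 2) → EuclideanSpace ℝ (Fin 2) → ℝ)
    (hρ : ∀ x y : EuclideanSpace ℝ (Fin 2), 0 < x 1 → 0 < y 1 →
      2 * Real.sinh (ρ x y / 2) = dist x y / Real.sqrt (x 1 * y 1))
    (hu : u = fun x y => 2 * Real.log ((dist x y + max (x 1) (y 1)) / Real.sqrt (x 1 * y 1)))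
    (e₂ : EuclideanSpace ℝ (Fin 2)) (he₂ : e₂ = EuclideanSpace.single 1 1) :
    (∀ t : ℝ, 1 < t →
      ρ (t • e₂) ((1/t) • e₂) = 2 * Real.log t ∧
      u (t • e₂) ((1/t) • e₂) = 2 * Real.log ((2*t^2 - 1)/t)) ∧
    Tendsto (fun t : ℝ => ρ (t • e₂) ((1/t) • e₂) / u (t • e₂) ((1/t) • e₂))
      atTop (nhds 1) := by
  have values : ∀ t : ℝ, 1 < t →
      ρ (t • e₂) ((1/t) • e₂) = 2 * log t ∧ u (t • e₂) ((1/t) • e₂) = 2 * log ((2*t^2 - 1)/t) := by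
    intro t ht
    have ht0 : 0 < t := by linarith
    have hinv : t⁻¹ < t := by linarith [inv_lt_one_of_one_lt₀ ht]
    have hx : (t • e₂) 1 = t := by simp [he₂]
    have hy : ((1/t) • e₂) 1 = t⁻¹ := by simp [he₂]
    have hdist : dist (t • e₂) ((1/t) • e₂) = t - t⁻¹ := by
      rw [he₂, EuclideanSpace.dist_smul_single_one, one_div, abs_of_pos (sub_pos.mpr hinv)]
    have hsqrt : √(t * t⁻¹) = 1 := by rw [mul_inv_cancel₀ ht0.ne', sqrt_one]
    have hρt := hρ _ _ (hx ▸ ht0) (hy ▸ inv_pos.mpr ht0)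
    rw [hx, hy, hdist, hsqrt, div_one] at hρt
    refine ⟨eq_two_mul_log_of_two_mul_sinh_half_eq ht0 hρt, ?_⟩
    rw [hu]
    dsimp only
    rw [hx, hy, hdist, hsqrt, div_one, max_eq_left hinv.le]
    congr 2
    field_simp
    ring
  refine ⟨values, (tendsto_self_div_self_add tendsto_log_atTop tendsto_log_two_sub_inv_sq).congr' ?_⟩
  filter_upwards [eventually_gt_atTop 1] with t ht
  rw [(values t ht).1, (values t ht).2, log_two_mul_sq_sub_one_div ht, mul_div_mul_left _ _ two_ne_zero]
end

section
/- In the once-punctured space D₀ = ℝⁿ \ {0}, for all x, y ∈ D₀ one has u_{D₀}(x,y) ≤ 2·τ̃_{D₀}(x,y) + 2·log 2, and the constant 2·log 2 is sharp (it is attained in the limit y = e₁, x = t·e₁, t → ∞). -/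
open Metric Real Filter

/-!
Since `max a b = |a - b| + min a b` and `min a b ≤ √(a b)`, one has
`max ‖x‖ ‖y‖ ≤ |x - y| + √(‖x‖ ‖y‖)`. Dividing by `√(‖x‖ ‖y‖)`, this bounds the argument
of the logarithm in `u` by twice that in `τ̃`. Along `x = t e₁`, `y = e₁` the two arguments are
`(2t - 1)/√t` and `(t - 1 + √t)/√t`, whose ratio tends to `2`.
-/

theorem Real.max_le_abs_sub_add_sqrt_mul {a b : ℝ} (ha : 0 ≤ a) (hb : 0 ≤ b) :
    max a b ≤ |a - b| + √(a * b) := by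
  have hmin : min a b ≤ √(a * b) :=
    le_sqrt_of_sq_le (pow_two (min a b) ▸
      mul_le_mul (min_le_left a b) (min_le_right a b) (le_min ha hb) ha)
  linarith [max_sub_min_eq_abs' a b]

section Punctured

variable {E : Type*} [NormedAddCommGroup E]

/- `τ̃_{D₀}` and `u_{D₀}` for `D₀ = E \ {0}`; at `0` they take the junk value of division
by `√0 = 0`. -/
noncomputable def tauPunctured (x y : E) : ℝ :=
  log (1 + dist x y / √(‖x‖ * ‖y‖))

noncomputable def uPunctured (x y : E) : ℝ :=
  2 * log ((dist x y + max ‖x‖ ‖y‖) / √(‖x‖ * ‖y‖))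

theorem dist_add_max_norm_le (x y : E) :
    dist x y + max ‖x‖ ‖y‖ ≤ 2 * (√(‖x‖ * ‖y‖) + dist x y) := by
  have hmax := Real.max_le_abs_sub_add_sqrt_mul (norm_nonneg x) (norm_nonneg y)
  have habs : |‖x‖ - ‖y‖| ≤ dist x y := dist_eq_norm x y ▸ abs_norm_sub_norm_le x y
  linarith [sqrt_nonneg (‖x‖ * ‖y‖), dist_nonneg (x := x) (y := y)]

theorem uPunctured_le {x y : E} (hx : x ≠ 0) (hy : y ≠ 0) :
    uPunctured x y ≤ 2 * tauPunctured x y + 2 * log 2 := by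
  set s := √(‖x‖ * ‖y‖)
  have hs : 0 < s := sqrt_pos.mpr (mul_pos (norm_pos_iff.mpr hx) (norm_pos_iff.mpr hy))
  have hratio : (dist x y + max ‖x‖ ‖y‖) / s ≤ 2 * (1 + dist x y / s) := by
    rw [div_le_iff₀ hs, mul_assoc, add_mul, div_mul_cancel₀ _ hs.ne', one_mul]
    exact dist_add_max_norm_le x y
  have hpos : 0 < (dist x y + max ‖x‖ ‖y‖) / s :=
    div_pos (add_pos_of_nonneg_of_pos dist_nonneg (lt_max_of_lt_left (norm_pos_iff.mpr hx))) hs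
  calc uPunctured x y ≤ 2 * log (2 * (1 + dist x y / s)) := by
        unfold uPunctured; gcongr
    _ = 2 * tauPunctured x y + 2 * log 2 := by
        rw [tauPunctured, log_mul two_ne_zero (by positivity)]; ring

variable [NormedSpace ℝ E]

theorem uPunctured_sub_tauPunctured_smul_self {e : E} (he : ‖e‖ = 1) {t : ℝ} (ht : 1 ≤ t) :
    uPunctured (t • e) e - 2 * tauPunctured (t • e) e =
      2 * log ((2 * t - 1) / (t - 1 + √t)) := by
  have hst : 0 < √t := sqrt_pos.mpr (by linarith)
  have hnorm : ‖t • e‖ = t := by rw [norm_smul, he, mul_one, norm_of_nonneg (by linarith)]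
  have hdist : dist (t • e) e = t - 1 := by
    rw [dist_eq_norm, show t • e - e = (t - 1) • e by rw [sub_smul, one_smul], norm_smul, he,
      mul_one, norm_of_nonneg (by linarith)]
  rw [uPunctured, tauPunctured, hnorm, hdist, he, max_eq_left ht, mul_one, one_add_div hst.ne',
    ← mul_sub, ← log_div (by positivity) (by positivity), div_div_div_cancel_right₀ hst.ne']
  ring_nf

theorem tendsto_two_mul_sub_one_div_sub_one_add_sqrt :
    Tendsto (fun t : ℝ => (2 * t - 1) / (t - 1 + √t)) atTop (nhds 2) := by
  have hinv := tendsto_inv_atTop_zero (𝕜 := ℝ)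
  have h : Tendsto (fun t : ℝ => (2 - t⁻¹) / (1 - t⁻¹ + (√t)⁻¹)) atTop
      (nhds ((2 - 0) / (1 - 0 + 0))) :=
    (tendsto_const_nhds.sub hinv).div
      (tendsto_const_nhds.sub hinv |>.add (hinv.comp tendsto_sqrt_atTop)) (by norm_num)
  rw [show ((2 : ℝ) - 0) / (1 - 0 + 0) = 2 by norm_num] at h
  refine h.congr' ?_
  filter_upwards [eventually_gt_atTop 0] with t ht
  rw [← mul_div_mul_left _ _ ht.ne']
  congr 1
  · field_simp
  · field_simp
    linear_combination (-1 : ℝ) * mul_self_sqrt ht.le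

theorem tendsto_uPunctured_sub_tauPunctured_smul_self {e : E} (he : ‖e‖ = 1) :
    Tendsto (fun t : ℝ => uPunctured (t • e) e - 2 * tauPunctured (t • e) e) atTop
      (nhds (2 * log 2)) := by
  refine Tendsto.congr' ?_
    (((continuousAt_log two_ne_zero).tendsto.comp
      tendsto_two_mul_sub_one_div_sub_one_add_sqrt).const_mul 2)
  filter_upwards [eventually_ge_atTop 1] with t ht
  exact (uPunctured_sub_tauPunctured_smul_self he ht).symm

end Punctured

/-- In the punctured space `D₀ = ℝⁿ \ {0}`, with
`τ̃(x,y) = log(1 + |x−y|/√(|x||y|))` and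
`u(x,y) = 2·log((|x−y| + max{|x|,|y|})/√(|x||y|))`, one has
`u ≤ 2 τ̃ + 2 log 2`, and the constant `2 log 2` is attained in the limit
`x = t e₁`, `y = e₁`, `t → ∞`. -/
theorem stmt7 {n : ℕ} (hn : 0 < n)
    (tau u : EuclideanSpace ℝ (Fin n) → EuclideanSpace ℝ (Fin n) → ℝ)
    (htau : tau = fun x y => Real.log (1 + dist x y / Real.sqrt (‖x‖ * ‖y‖)))
    (hu : u = fun x y => 2 * Real.log ((dist x y + max ‖x‖ ‖y‖) / Real.sqrt (‖x‖ * ‖y‖)))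
    (e₁ : EuclideanSpace ℝ (Fin n)) (he₁ : e₁ = EuclideanSpace.single ⟨0, hn⟩ 1) :
    (∀ x y : EuclideanSpace ℝ (Fin n), x ≠ 0 → y ≠ 0 →
      u x y ≤ 2 * tau x y + 2 * Real.log 2) ∧
    Tendsto (fun t : ℝ => u (t • e₁) e₁ - 2 * tau (t • e₁) e₁) atTop
      (nhds (2 * Real.log 2)) := by
  subst htau hu he₁
  exact ⟨fun x y hx hy => uPunctured_le hx hy,
    tendsto_uPunctured_sub_tauPunctured_smul_self (by simp)⟩
end

section
/- In the once-punctured space D₀ = ℝⁿ \ {0}, for all x, y ∈ D₀ one has u_{D₀}(x,y) ≤ 4·τ̃_{D₀}(x,y). -/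
open Metric Real

/-!
With `s = √(‖x‖‖y‖)` and `d = ‖x - y‖`, the claim is `(d + max ‖x‖ ‖y‖) / s ≤ (1 + d / s)²`,
i.e. `s (d + max) ≤ (s + d)²`. If `‖y‖ ≤ ‖x‖` then `‖y‖ ≤ s`, so `s (‖x‖ - s) ≤ s (‖x‖ - ‖y‖) ≤ s d`,
which is the claim up to the extra term `d²`.
-/

lemma sqrt_mul_mul_add_max_le_sq {a b d : ℝ} (ha : 0 ≤ a) (hb : 0 ≤ b) (hd : |a - b| ≤ d) :
    √(a * b) * (d + max a b) ≤ (√(a * b) + d) ^ 2 := by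
  have hs : √(a * b) ^ 2 = a * b := sq_sqrt (mul_nonneg ha hb)
  have hs0 : 0 ≤ √(a * b) := sqrt_nonneg _
  obtain ⟨hda, hdb⟩ := abs_sub_le_iff.mp hd
  rcases le_total b a with hba | hab
  · have hbs : b ≤ √(a * b) := by nlinarith
    rw [max_eq_left hba]
    nlinarith [mul_le_mul_of_nonneg_left (sub_le_sub_left hbs a) hs0]
  · have has : a ≤ √(a * b) := by nlinarith
    rw [max_eq_right hab]
    nlinarith [mul_le_mul_of_nonneg_left (sub_le_sub_left has b) hs0]

lemma log_add_max_div_sqrt_le_two_mul_log {a b d : ℝ} (ha : 0 < a) (hb : 0 < b)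
    (hd : |a - b| ≤ d) :
    log ((d + max a b) / √(a * b)) ≤ 2 * log (1 + d / √(a * b)) := by
  have hs : 0 < √(a * b) := sqrt_pos.mpr (mul_pos ha hb)
  have hd0 : 0 ≤ d := (abs_nonneg _).trans hd
  have hmax : 0 < d + max a b := add_pos_of_nonneg_of_pos hd0 (ha.trans_le (le_max_left a b))
  rw [← Nat.cast_ofNat, ← log_pow]
  refine log_le_log (div_pos hmax hs) ?_
  rw [one_add_div hs.ne', div_pow, div_le_div_iff₀ hs (by positivity), sq (√(a * b)), ← mul_assoc,
    mul_comm (d + max a b)]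
  exact mul_le_mul_of_nonneg_right (sqrt_mul_mul_add_max_le_sq ha.le hb.le hd) hs.le

/-- In the punctured space `D₀ = ℝⁿ \ {0}`, with
`τ̃(x,y) = log(1 + |x−y|/√(|x||y|))` and
`u(x,y) = 2·log((|x−y| + max{|x|,|y|})/√(|x||y|))`, one has `u ≤ 4 τ̃`. -/
theorem stmt8 {n : ℕ}
    (tau u : EuclideanSpace ℝ (Fin n) → EuclideanSpace ℝ (Fin n) → ℝ)
    (htau : tau = fun x y => Real.log (1 + dist x y / Real.sqrt (‖x‖ * ‖y‖)))
    (hu : u = fun x y => 2 * Real.log ((dist x y + max ‖x‖ ‖y‖) / Real.sqrt (‖x‖ * ‖y‖)))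
    (x y : EuclideanSpace ℝ (Fin n)) (hx : x ≠ 0) (hy : y ≠ 0) :
    u x y ≤ 4 * tau x y := by
  subst htau hu
  have hdist : |‖x‖ - ‖y‖| ≤ dist x y := by
    rw [dist_eq_norm]
    exact abs_norm_sub_norm_le x y
  have hlog := log_add_max_div_sqrt_le_two_mul_log (norm_pos_iff.mpr hx) (norm_pos_iff.mpr hy) hdist
  dsimp only
  linarith
end

section
/- Let p ≠ q in ℝⁿ and D = ℝⁿ \ {p, q}. Then for all x, y ∈ D, u_D(x,y) ≤ 4·τ̃_D(x,y). -/
/-!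
Write `t = |x − y|`, `m = min{d(x), d(y)}` and `D = max{d(x), d(y)}`, so that `d(x) d(y) = m D`.
Since `d` is 1-Lipschitz, `D ≤ t + m`; and if `c ∈ {p, q}` realises `m` at `x` (say), then
`|x − c| |y − c| ≤ m (t + m)`, whence `τ̃ ≥ log (1 + t/√(m(t+m)))`. It remains to check the
one-variable inequality `(t + D)/√(mD) ≤ (1 + t/√(m(t+m)))²` on `m ≤ D ≤ t + m`: with
`a = √m`, `s = √D`, `b = √(t+m)` its two sides differ by a polynomial that is concave in `s` and
nonnegative at `s = a` and `s = b`.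
-/

open Real

theorem max_le_add_min_of_abs_sub_le {α : Type*} [AddCommGroup α] [LinearOrder α]
    [IsOrderedAddMonoid α] {a b t : α} (h : |a - b| ≤ t) : max a b ≤ t + min a b :=
  sub_le_iff_le_add.1 ((max_sub_min_eq_abs' a b).trans_le h)

section PseudoMetricSpace

variable {α : Type*} [PseudoMetricSpace α]

theorem dist_mul_dist_le_min_mul (x y c : α) :
    dist x c * dist y c ≤ min (dist x c) (dist y c) * (dist x y + min (dist x c) (dist y c)) := by
  rw [← min_mul_max]
  exact mul_le_mul_of_nonneg_left (max_le_add_min_of_abs_sub_le (abs_dist_sub_le x y c))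
    (le_min dist_nonneg dist_nonneg)

theorem abs_min_dist_sub_min_dist_le (x y p q : α) :
    |min (dist x p) (dist x q) - min (dist y p) (dist y q)| ≤ dist x y :=
  (abs_min_sub_min_le_max _ _ _ _).trans (max_le (abs_dist_sub_le x y p) (abs_dist_sub_le x y q))

theorem dist_mul_dist_le_or_dist_mul_dist_le (x y p q : α) {m : ℝ}
    (hm : min (min (dist x p) (dist x q)) (min (dist y p) (dist y q)) = m) :
    dist x p * dist y p ≤ m * (dist x y + m) ∨ dist x q * dist y q ≤ m * (dist x y + m) := by
  rw [min_min_min_comm] at hm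
  rcases min_choice (min (dist x p) (dist y p)) (min (dist x q) (dist y q)) with h | h <;>
    rw [h] at hm <;> subst hm
  · exact .inl (dist_mul_dist_le_min_mul x y p)
  · exact .inr (dist_mul_dist_le_min_mul x y q)

end PseudoMetricSpace

theorem sq_sub_sq_add_sq_mul_le {a s b : ℝ} (ha : 0 < a) (has : a ≤ s) (hsb : s ≤ b) :
    a * b ^ 2 * (b ^ 2 - a ^ 2 + s ^ 2) ≤ s * (a * b + (b ^ 2 - a ^ 2)) ^ 2 := by
  have hb := ha.trans_le (has.trans hsb)
  -- `h₁`, `h₂`: the values at `s = a`, `s = b` divided by `b - a`; `h₃`: the concavity correction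
  have h₁ : 0 ≤ (b - s) * (a ^ 2 * (a + b) * (2 * b - a)) :=
    mul_nonneg (by linarith) (mul_nonneg (by positivity) (by linarith))
  have h₂ : 0 ≤ (s - a) * (b * (a ^ 2 * b + (b - a) * (a + b) ^ 2)) :=
    mul_nonneg (by linarith) (mul_nonneg hb.le (add_nonneg (by positivity)
      (mul_nonneg (by linarith) (sq_nonneg _))))
  have h₃ : 0 ≤ a * b ^ 2 * ((s - a) * (b - s)) :=
    mul_nonneg (by positivity) (mul_nonneg (by linarith) (by linarith))
  linear_combination h₁ + h₂ + h₃

theorem sq_sub_sq_add_sq_div_le {a s b : ℝ} (ha : 0 < a) (has : a ≤ s) (hsb : s ≤ b) :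
    (b ^ 2 - a ^ 2 + s ^ 2) / (a * s) ≤ (1 + (b ^ 2 - a ^ 2) / (a * b)) ^ 2 := by
  have hs := ha.trans_le has
  have hb := hs.trans_le hsb
  rw [one_add_div (by positivity), div_pow, div_le_div_iff₀ (by positivity) (by positivity)]
  linear_combination a * sq_sub_sq_add_sq_mul_le ha has hsb

theorem add_div_sqrt_mul_le {t m D : ℝ} (ht : 0 ≤ t) (hm : 0 < m) (hmD : m ≤ D)
    (hD : D ≤ t + m) :
    (t + D) / √(m * D) ≤ (1 + t / √(m * (t + m))) ^ 2 := by
  obtain ⟨a, ha, rfl⟩ : ∃ a, 0 < a ∧ a ^ 2 = m := ⟨√m, sqrt_pos.2 hm, sq_sqrt hm.le⟩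
  obtain ⟨s, hs, rfl⟩ : ∃ s, 0 ≤ s ∧ s ^ 2 = D := ⟨√D, sqrt_nonneg _, sq_sqrt (hm.le.trans hmD)⟩
  obtain ⟨b, hb, hbt⟩ : ∃ b, 0 ≤ b ∧ b ^ 2 = t + a ^ 2 :=
    ⟨√(t + a ^ 2), sqrt_nonneg _, sq_sqrt (by positivity)⟩
  rw [← hbt, ← mul_pow, ← mul_pow, sqrt_sq (by positivity), sqrt_sq (by positivity),
    show t = b ^ 2 - a ^ 2 by linarith]
  exact sq_sub_sq_add_sq_div_le ha ((pow_le_pow_iff_left₀ ha.le hs two_ne_zero).1 hmD)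
    ((pow_le_pow_iff_left₀ hs hb two_ne_zero).1 (hbt ▸ hD))

theorem stmt9_general {n : ℕ} (p q : EuclideanSpace ℝ (Fin n))
    (d tau u : _)
    (hd : d = fun x : EuclideanSpace ℝ (Fin n) => min (dist x p) (dist x q))
    (htau : tau = fun x y : EuclideanSpace ℝ (Fin n) => Real.log (1 +
      max (dist x y / Real.sqrt (dist x p * dist y p))
          (dist x y / Real.sqrt (dist x q * dist y q))))
    (hu : u = fun x y : EuclideanSpace ℝ (Fin n) =>
      2 * Real.log ((dist x y + max (d x) (d y)) / Real.sqrt (d x * d y)))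
    (x y : EuclideanSpace ℝ (Fin n)) (hx : x ≠ p ∧ x ≠ q) (hy : y ≠ p ∧ y ≠ q) :
    u x y ≤ 4 * tau x y := by
  subst hd htau hu
  beta_reduce
  have hxp := dist_pos.2 hx.1; have hxq := dist_pos.2 hx.2
  have hyp := dist_pos.2 hy.1; have hyq := dist_pos.2 hy.2
  set t := dist x y
  set m := min (min (dist x p) (dist x q)) (min (dist y p) (dist y q)) with hm
  have hm₀ : 0 < m := lt_min (lt_min hxp hxq) (lt_min hyp hyq)
  have hr : t / √(m * (t + m)) ≤ max (t / √(dist x p * dist y p)) (t / √(dist x q * dist y q)) := by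
    rcases dist_mul_dist_le_or_dist_mul_dist_le x y p q hm.symm with h | h
    · exact le_max_of_le_left <| div_le_div_of_nonneg_left dist_nonneg
        (sqrt_pos.2 (mul_pos hxp hyp)) (sqrt_le_sqrt h)
    · exact le_max_of_le_right <| div_le_div_of_nonneg_left dist_nonneg
        (sqrt_pos.2 (mul_pos hxq hyq)) (sqrt_le_sqrt h)
  have hquot := add_div_sqrt_mul_le dist_nonneg hm₀ min_le_max
    (max_le_add_min_of_abs_sub_le (abs_min_dist_sub_min_dist_le x y p q))
  rw [min_mul_max] at hquot
  calc 2 * log ((t + max _ _) / √(_ * _))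
      ≤ 2 * log ((1 + t / √(m * (t + m))) ^ 2) := by gcongr
    _ = 4 * log (1 + t / √(m * (t + m))) := by rw [log_pow]; ring
    _ ≤ _ := by gcongr

/-- In the twice-punctured space `D = ℝⁿ \ {p, q}` (`p ≠ q`), with
`d(x) = min{|x−p|, |x−q|}`,
`τ̃(x,y) = log(1 + max{|x−y|/√(|x−p||y−p|), |x−y|/√(|x−q||y−q|)})` and
`u(x,y) = 2·log((|x−y| + max{d(x),d(y)})/√(d(x)d(y)))`, one has `u ≤ 4 τ̃`. -/
theorem stmt9 {n : ℕ} (p q : EuclideanSpace ℝ (Fin n)) (hpq : p ≠ q)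
    (d tau u : _)
    (hd : d = fun x : EuclideanSpace ℝ (Fin n) => min (dist x p) (dist x q))
    (htau : tau = fun x y : EuclideanSpace ℝ (Fin n) => Real.log (1 +
      max (dist x y / Real.sqrt (dist x p * dist y p))
          (dist x y / Real.sqrt (dist x q * dist y q))))
    (hu : u = fun x y : EuclideanSpace ℝ (Fin n) =>
      2 * Real.log ((dist x y + max (d x) (d y)) / Real.sqrt (d x * d y)))
    (x y : EuclideanSpace ℝ (Fin n)) (hx : x ≠ p ∧ x ≠ q) (hy : y ≠ p ∧ y ≠ q) :
    u x y ≤ 4 * tau x y :=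
  stmt9_general p q d tau u hd htau hu x y hx hy
end

section
/- In the unit ball 𝔹ⁿ, lim_{|x|→1} u_{𝔹ⁿ}(x,−x) / (4·τ̃_{𝔹ⁿ}(x,−x)) = 1, where u_{𝔹ⁿ}(x,−x) = 2·log((1+|x|)/(1−|x|)) and τ̃_{𝔹ⁿ}(x,−x) = log(1 + 2|x|/√(1−|x|²)); hence the inequality u_D ≤ 4·τ̃_D is sharp. -/
/-!
For a point `x = r • v` with `‖v‖ = 1`, Cauchy–Schwarz gives
`|x - p| |p + x| ≥ 1 - r²` for every `p` on the unit sphere, with equality at `p = v`; hence the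
supremum defining `τ̃(x, -x)` is `2r / √(1 - r²)`. Then
`u(x, -x) - 4 τ̃(x, -x) = 4 log ((1 + r) / (√(1 - r²) + 2r)) → 0` as `r → 1⁻`,
while `τ̃(x, -x) → ∞`, so the ratio tends to `1`.
-/

open Metric Real Filter Topology Asymptotics

lemma dist_self_neg {E : Type*} [SeminormedAddCommGroup E] [NormedSpace ℝ E] (x : E) :
    dist x (-x) = 2 * ‖x‖ := by
  rw [dist_eq_norm, sub_neg_eq_add, ← two_smul ℝ, norm_smul]; norm_num

section
variable {E : Type*} [NormedAddCommGroup E] [InnerProductSpace ℝ E]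

lemma one_sub_norm_sq_le_dist_mul_dist_neg (x : E) {p : E} (hp : ‖p‖ = 1) :
    1 - ‖x‖ ^ 2 ≤ dist x p * dist p (-x) := by
  have hxp : dist x p ^ 2 = ‖x‖ ^ 2 - 2 * inner ℝ x p + 1 := by
    rw [dist_eq_norm, norm_sub_sq_real, hp, one_pow]
  have hpx : dist p (-x) ^ 2 = ‖x‖ ^ 2 + 2 * inner ℝ x p + 1 := by
    rw [dist_eq_norm, sub_neg_eq_add, norm_add_sq_real, hp, real_inner_comm]; ring
  have hcs : inner ℝ x p ^ 2 ≤ ‖x‖ ^ 2 := by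
    simpa [hp, sq] using real_inner_mul_inner_self_le x p
  refine (le_abs_self _).trans (abs_le_of_sq_le_sq ?_ (by positivity))
  rw [mul_pow, hxp, hpx]
  nlinarith

lemma iSup_sphere_dist_neg_div_sqrt {v : E} (hv : ‖v‖ = 1) {r : ℝ} (h0 : 0 ≤ r) (h1 : r < 1) :
    ⨆ p : sphere (0 : E) 1, dist (r • v) (-(r • v)) / √(dist (r • v) p * dist (p : E) (-(r • v)))
      = 2 * r / √(1 - r ^ 2) := by
  have hnorm : ‖r • v‖ = r := by rw [norm_smul_of_nonneg h0, hv, mul_one]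
  have hsq : 0 < 1 - r ^ 2 := by nlinarith
  have hle : ∀ p : sphere (0 : E) 1,
      dist (r • v) (-(r • v)) / √(dist (r • v) p * dist (p : E) (-(r • v)))
        ≤ 2 * r / √(1 - r ^ 2) := by
    rintro ⟨p, hp⟩
    rw [mem_sphere_zero_iff_norm] at hp
    rw [dist_self_neg, hnorm]
    gcongr
    simpa [hnorm] using one_sub_norm_sq_le_dist_mul_dist_neg (r • v) hp
  have hattained : dist (r • v) v * dist v (-(r • v)) = 1 - r ^ 2 := by
    rw [dist_eq_norm, dist_eq_norm, sub_neg_eq_add, show r • v - v = (r - 1) • v by module,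
      show v + r • v = (1 + r) • v by module,
      norm_smul, norm_smul, hv, Real.norm_eq_abs, Real.norm_eq_abs, abs_of_nonpos (by linarith),
      abs_of_pos (by linarith)]
    ring
  have hv' : v ∈ sphere (0 : E) 1 := mem_sphere_zero_iff_norm.2 hv
  have : Nonempty (sphere (0 : E) 1) := ⟨⟨v, hv'⟩⟩
  refine le_antisymm (ciSup_le hle) (le_ciSup_of_le ⟨_, Set.forall_mem_range.2 hle⟩ ⟨v, hv'⟩ ?_)
  rw [dist_self_neg, hnorm, hattained]
end

lemma tendsto_div_of_tendsto_sub {α : Type*} {l : Filter α} {f g : α → ℝ}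
    (hf : Tendsto f l atTop) (hgf : Tendsto (fun x => g x - f x) l (𝓝 0)) :
    Tendsto (fun x => g x / f x) l (𝓝 1) := by
  have hequiv : g ~[l] f :=
    (hgf.isBigO_one ℝ).trans_isLittleO
      ((isLittleO_one_left_iff ℝ).2 (tendsto_norm_atTop_atTop.comp hf))
  exact (isEquivalent_iff_tendsto_one (hf.eventually_ne_atTop 0)).1 hequiv

lemma tendsto_sqrt_one_sub_sq_nhdsLT_one :
    Tendsto (fun r : ℝ => √(1 - r ^ 2)) (𝓝[<] 1) (𝓝[>] 0) := by
  refine tendsto_nhdsWithin_iff.2 ⟨?_, ?_⟩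
  · have hcont : ContinuousAt (fun r : ℝ => √(1 - r ^ 2)) 1 := by fun_prop
    simpa using hcont.tendsto.mono_left nhdsWithin_le_nhds
  · filter_upwards [Ioo_mem_nhdsLT (show (0 : ℝ) < 1 by norm_num)] with r hr
    exact Real.sqrt_pos.2 (by nlinarith [hr.1, hr.2])

lemma tendsto_log_one_add_two_mul_div_sqrt_one_sub_sq :
    Tendsto (fun r : ℝ => log (1 + 2 * r / √(1 - r ^ 2))) (𝓝[<] 1) atTop := by
  have htwo : Tendsto (fun r : ℝ => 2 * r) (𝓝[<] 1) (𝓝 2) := by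
    simpa using ((continuous_const_mul (2 : ℝ)).tendsto 1).mono_left nhdsWithin_le_nhds
  have hquot : Tendsto (fun r : ℝ => 2 * r / √(1 - r ^ 2)) (𝓝[<] 1) atTop := by
    simpa only [div_eq_mul_inv, Pi.inv_apply] using
      htwo.pos_mul_atTop two_pos tendsto_sqrt_one_sub_sq_nhdsLT_one.inv_tendsto_nhdsGT_zero
  exact tendsto_log_atTop.comp (tendsto_atTop_add_const_left _ 1 hquot)

lemma log_div_sub_two_mul_log_one_add_div_sqrt {r : ℝ} (h0 : 0 < r) (h1 : r < 1) :
    log ((1 + r) / (1 - r)) - 2 * log (1 + 2 * r / √(1 - r ^ 2))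
      = 2 * log (1 + r) - 2 * log (√(1 - r ^ 2) + 2 * r) := by
  have hsq : 0 < 1 - r ^ 2 := by nlinarith
  have hs : 0 < √(1 - r ^ 2) := Real.sqrt_pos.2 hsq
  have hlog_sqrt : log √(1 - r ^ 2) = (log (1 - r) + log (1 + r)) / 2 := by
    rw [Real.log_sqrt hsq.le, show 1 - r ^ 2 = (1 - r) * (1 + r) by ring,
      Real.log_mul (by linarith) (by linarith)]
  rw [Real.log_div (by linarith) (by linarith), one_add_div hs.ne',
    Real.log_div (by positivity) hs.ne', hlog_sqrt]
  ring

lemma tendsto_log_div_div_log_one_add_div_sqrt :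
    Tendsto (fun r : ℝ => 2 * log ((1 + r) / (1 - r)) / (4 * log (1 + 2 * r / √(1 - r ^ 2))))
      (𝓝[<] 1) (𝓝 1) := by
  have hcont : ContinuousAt
      (fun r : ℝ => 4 * log (1 + r) - 4 * log (√(1 - r ^ 2) + 2 * r)) 1 := by
    fun_prop (disch := norm_num)
  have hlim : Tendsto (fun r : ℝ => 4 * log (1 + r) - 4 * log (√(1 - r ^ 2) + 2 * r))
      (𝓝[<] 1) (𝓝 0) := by
    simpa [one_add_one_eq_two] using hcont.tendsto.mono_left nhdsWithin_le_nhds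
  have hdiff : Tendsto
      (fun r : ℝ => 2 * log ((1 + r) / (1 - r)) - 4 * log (1 + 2 * r / √(1 - r ^ 2)))
      (𝓝[<] 1) (𝓝 0) := by
    refine hlim.congr' ?_
    filter_upwards [Ioo_mem_nhdsLT (show (0 : ℝ) < 1 by norm_num)] with r hr
    linear_combination (-2) * log_div_sub_two_mul_log_one_add_div_sqrt hr.1 hr.2
  exact tendsto_div_of_tendsto_sub
    (tendsto_log_one_add_two_mul_div_sqrt_one_sub_sq.const_mul_atTop four_pos) hdiff

/-- Sharpness of `u_D ≤ 4 τ̃_D` in the unit ball: for antipodal points `x, −x`,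
`u_{𝔹ⁿ}(x,−x) = 2 log((1+|x|)/(1−|x|))`, `τ̃_{𝔹ⁿ}(x,−x) = log(1 + 2|x|/√(1−|x|²))`,
and `u_{𝔹ⁿ}(x,−x)/(4 τ̃_{𝔹ⁿ}(x,−x)) → 1` as `|x| → 1`. -/
theorem stmt11 {n : ℕ}
    (tau u : EuclideanSpace ℝ (Fin n) → EuclideanSpace ℝ (Fin n) → ℝ)
    (htau : tau = fun x y => Real.log (1 + ⨆ p : frontier (Metric.ball (0 : EuclideanSpace ℝ (Fin n)) 1),
      dist x y / Real.sqrt (dist x (p : EuclideanSpace ℝ (Fin n)) * dist (p : EuclideanSpace ℝ (Fin n)) y)))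
    (hu : u = fun x y => 2 * Real.log ((dist x y + max (1 - ‖x‖) (1 - ‖y‖)) / Real.sqrt ((1 - ‖x‖) * (1 - ‖y‖))))
    (v : EuclideanSpace ℝ (Fin n)) (hv : ‖v‖ = 1) :
    (∀ r : ℝ, 0 < r → r < 1 →
      u (r • v) (-(r • v)) = 2 * Real.log ((1 + r) / (1 - r)) ∧
      tau (r • v) (-(r • v)) = Real.log (1 + 2 * r / Real.sqrt (1 - r^2))) ∧
    Tendsto (fun r : ℝ => u (r • v) (-(r • v)) / (4 * tau (r • v) (-(r • v))))
      (nhdsWithin 1 (Set.Iio 1)) (nhds 1) := by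
  have hformulas : ∀ r : ℝ, 0 < r → r < 1 →
      u (r • v) (-(r • v)) = 2 * log ((1 + r) / (1 - r)) ∧
      tau (r • v) (-(r • v)) = log (1 + 2 * r / √(1 - r ^ 2)) := by
    intro r h0 h1
    have hnorm : ‖r • v‖ = r := by rw [norm_smul_of_nonneg h0.le, hv, mul_one]
    have : Nontrivial (EuclideanSpace ℝ (Fin n)) :=
      nontrivial_of_ne v 0 (by rintro rfl; simp at hv)
    subst htau hu
    constructor
    · beta_reduce
      rw [norm_neg, hnorm, max_self, dist_self_neg, hnorm, Real.sqrt_mul_self (by linarith)]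
      ring_nf
    · beta_reduce
      rw [frontier_ball _ one_ne_zero, iSup_sphere_dist_neg_div_sqrt hv h0.le h1]
  refine ⟨hformulas, tendsto_log_div_div_log_one_add_div_sqrt.congr' ?_⟩
  filter_upwards [Ioo_mem_nhdsLT (show (0 : ℝ) < 1 by norm_num)] with r hr
  obtain ⟨hu, htau⟩ := hformulas r hr.1 hr.2
  rw [hu, htau]
end

section
/- For any domain D ⊊ ℝⁿ and x, y ∈ D, s_D(x,y) ≤ u_D(x,y)/log 9. -/
/-!
With `t = min 1 (|x - y| / (d(x) + d(y)))`, every boundary point `p` has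
`|x - p| + |p - y| ≥ max (|x - y|, d(x) + d(y))`, so `s_D(x, y) ≤ t`. On the other side,
`√(d(x) d(y))` is at most both `max (d(x), d(y))` and `(d(x) + d(y)) / 2`, which gives
`u_D(x, y) ≥ 2 log (1 + 2t)`, and concavity of `log` on `[1, 3]` gives `log (1 + 2t) ≥ t log 3`.
-/

open Metric Real

theorem mul_log_three_le_log_one_add_two_mul {t : ℝ} (h0 : 0 ≤ t) (h1 : t ≤ 1) :
    t * log 3 ≤ log (1 + 2 * t) := by
  have hconcave := strictConcaveOn_log_Ioi.concaveOn.2 (Set.mem_Ioi.mpr one_pos)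
    (Set.mem_Ioi.mpr (by norm_num : (0 : ℝ) < 3)) (by linarith : 0 ≤ 1 - t) h0 (by ring)
  simp only [smul_eq_mul, log_one, mul_zero, zero_add, mul_one] at hconcave
  calc t * log 3 ≤ log (1 - t + t * 3) := hconcave
    _ = log (1 + 2 * t) := by ring_nf

theorem two_mul_sqrt_mul_le_add {a b : ℝ} (ha : 0 ≤ a) (hb : 0 ≤ b) :
    2 * √(a * b) ≤ a + b := by
  have hsq : (2 * √(a * b)) ^ 2 ≤ (a + b) ^ 2 := by
    rw [mul_pow, sq_sqrt (mul_nonneg ha hb)]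
    nlinarith [sq_nonneg (a - b)]
  exact pow_le_pow_iff_left₀ (by positivity) (by positivity) two_ne_zero |>.mp hsq

theorem one_add_two_mul_min_le {a b r : ℝ} (ha : 0 < a) (hb : 0 < b) (hr : 0 ≤ r) :
    1 + 2 * min 1 (r / (a + b)) ≤ (r + max a b) / √(a * b) := by
  set t := min 1 (r / (a + b))
  have hg : 0 < √(a * b) := sqrt_pos.mpr (mul_pos ha hb)
  have hgmax : √(a * b) ≤ max a b := by
    rw [sqrt_le_left (ha.le.trans (le_max_left a b)), sq]
    exact mul_le_mul (le_max_left a b) (le_max_right a b) hb.le (ha.le.trans (le_max_left a b))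
  have htr : 2 * t * √(a * b) ≤ r :=
    calc 2 * t * √(a * b) = t * (2 * √(a * b)) := by ring
      _ ≤ t * (a + b) := by gcongr; exact two_mul_sqrt_mul_le_add ha.le hb.le
      _ ≤ r := (le_div_iff₀ (by positivity)).mp (min_le_right _ _)
  rw [le_div_iff₀ hg]
  linarith

theorem min_one_div_mul_log_nine_le {a b r : ℝ} (ha : 0 < a) (hb : 0 < b) (hr : 0 ≤ r) :
    min 1 (r / (a + b)) * log 9 ≤ 2 * log ((r + max a b) / √(a * b)) := by
  set t := min 1 (r / (a + b))
  have ht0 : 0 ≤ t := le_min zero_le_one (by positivity)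
  have hlog9 : log 9 = 2 * log 3 := by
    rw [show (9 : ℝ) = 3 ^ 2 by norm_num, log_pow, Nat.cast_ofNat]
  calc t * log 9 = 2 * (t * log 3) := by rw [hlog9]; ring
    _ ≤ 2 * log (1 + 2 * t) := by
        gcongr; exact mul_log_three_le_log_one_add_two_mul ht0 (min_le_left _ _)
    _ ≤ 2 * log ((r + max a b) / √(a * b)) := by
        gcongr
        exact one_add_two_mul_min_le ha hb hr

theorem iSup_dist_div_dist_add_dist_le {α : Type*} [PseudoMetricSpace α] {A : Set α} {x y : α}
    (h : 0 < infDist x A + infDist y A) :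
    ⨆ p : A, dist x y / (dist x p + dist (p : α) y) ≤
      min 1 (dist x y / (infDist x A + infDist y A)) := by
  refine Real.iSup_le (fun p => le_min ?_ ?_) (le_min zero_le_one (by positivity))
  · exact div_le_one_of_le₀ (dist_triangle x p y) (by positivity)
  · refine div_le_div_of_nonneg_left dist_nonneg h (add_le_add ?_ ?_)
    · exact infDist_le_dist_of_mem p.2
    · exact dist_comm y p ▸ infDist_le_dist_of_mem p.2

theorem stmt18_general {n : ℕ} (D : Set (EuclideanSpace ℝ (Fin n)))
    (hDopen : IsOpen D) (hDproper : D ≠ Set.univ)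
    (d s u : _)
    (hd : d = fun x => Metric.infDist x (frontier D))
    (hs : s = fun x y => ⨆ p : frontier D,
      dist x y / (dist x (p : EuclideanSpace ℝ (Fin n)) + dist (p : EuclideanSpace ℝ (Fin n)) y))
    (hu : u = fun x y => 2 * Real.log ((dist x y + max (d x) (d y)) / Real.sqrt (d x * d y)))
    (x y : EuclideanSpace ℝ (Fin n)) (hx : x ∈ D) (hy : y ∈ D) :
    s x y ≤ u x y / Real.log 9 := by
  subst hd hs hu
  have hne : (frontier D).Nonempty := nonempty_frontier_iff.mpr ⟨⟨x, hx⟩, hDproper⟩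
  have hpos {z} (hz : z ∈ D) : 0 < infDist z (frontier D) :=
    (isClosed_frontier.notMem_iff_infDist_pos hne).mp fun hzf => (hDopen.frontier_eq ▸ hzf).2 hz
  have hdx := hpos hx
  have hdy := hpos hy
  rw [le_div_iff₀ (log_pos (by norm_num))]
  calc _ ≤ min 1 (dist x y / (infDist x (frontier D) + infDist y (frontier D))) * log 9 := by
        gcongr
        exact iSup_dist_div_dist_add_dist_le (by positivity)
    _ ≤ _ := min_one_div_mul_log_nine_le hdx hdy dist_nonneg

/-- For any proper subdomain `D ⊊ ℝⁿ` and `x, y ∈ D`, the triangular ratio metric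
`s_D(x,y) = sup_{p ∈ ∂D} |x−y|/(|x−p|+|p−y|)` and
`u_D(x,y) = 2 log((|x−y| + max{d(x),d(y)})/√(d(x)d(y)))` satisfy
`s_D(x,y) ≤ u_D(x,y)/log 9`. -/
theorem stmt18 {n : ℕ} (D : Set (EuclideanSpace ℝ (Fin n)))
    (hDopen : IsOpen D) (hDconn : IsConnected D) (hDproper : D ≠ Set.univ)
    (d s u : _)
    (hd : d = fun x => Metric.infDist x (frontier D))
    (hs : s = fun x y => ⨆ p : frontier D,
      dist x y / (dist x (p : EuclideanSpace ℝ (Fin n)) + dist (p : EuclideanSpace ℝ (Fin n)) y))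
    (hu : u = fun x y => 2 * Real.log ((dist x y + max (d x) (d y)) / Real.sqrt (d x * d y)))
    (x y : EuclideanSpace ℝ (Fin n)) (hx : x ∈ D) (hy : y ∈ D) :
    s x y ≤ u x y / Real.log 9 :=
  stmt18_general D hDopen hDproper d s u hd hs hu x y hx hy
end

section
/- For any domain D ⊊ ℝⁿ and x, y ∈ D, η_D(x,y) ≤ u_D(x,y) ≤ 4·log(2 + e^{η_D(x,y)}). -/
/-!
Write `t = |x - y|`, `M = max (d x) (d y)`, so that `u = log ((t + M)² / (d x d y))`.
For a boundary point `p` the triangle inequality gives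
`|x - p| / |y - p| ≤ 1 + t / d y ≤ (t + M) / d y ≤ (t + M)² / (d x d y)`, whence `η ≤ u`.
Conversely, with `E = exp η`, every `p ∈ ∂D` satisfies `|y - p| ≤ E |x - p|`; taking infima over
`p` yields `d y ≤ E d x` and `t ≤ (1 + E) d x`, and symmetrically. Hence `t + M ≤ (2 + E) M` and
`M² ≤ E d x d y`, so `(t + M)² / (d x d y) ≤ (2 + E)² E ≤ (2 + E)⁴`.
-/

open Metric Real

noncomputable section

variable {α : Type*} [PseudoMetricSpace α] {s : Set α} {x y p : α}

def halfApollonian (s : Set α) (x y : α) : ℝ :=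
  ⨆ p : s, |log (dist x p / dist y p)|

def uMetric (s : Set α) (x y : α) : ℝ :=
  2 * log ((dist x y + max (infDist x s) (infDist y s)) / √(infDist x s * infDist y s))

theorem halfApollonian_comm (s : Set α) (x y : α) :
    halfApollonian s x y = halfApollonian s y x := by
  simp only [halfApollonian, ← inv_div (dist y _), log_inv, abs_neg]

theorem uMetric_comm (s : Set α) (x y : α) : uMetric s x y = uMetric s y x := by
  simp only [uMetric, dist_comm x y, max_comm (infDist x s), mul_comm (infDist x s)]

theorem uMetric_eq_log (s : Set α) (x y : α) :
    uMetric s x y = log ((dist x y + max (infDist x s) (infDist y s)) ^ 2 /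
      (infDist x s * infDist y s)) := by
  rw [uMetric, show (2 : ℝ) = (2 : ℕ) by norm_num, ← log_pow, div_pow,
    sq_sqrt (mul_nonneg infDist_nonneg infDist_nonneg)]

theorem dist_div_dist_le (hp : p ∈ s) (hx : 0 < infDist x s) (hy : 0 < infDist y s) :
    dist x p / dist y p ≤
      (dist x y + max (infDist x s) (infDist y s)) ^ 2 / (infDist x s * infDist y s) := by
  set t := dist x y
  set M := max (infDist x s) (infDist y s)
  have hyp : infDist y s ≤ dist y p := infDist_le_dist_of_mem hp
  have hM : 1 ≤ (t + M) / infDist x s :=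
    (one_le_div hx).mpr (le_add_of_nonneg_of_le dist_nonneg (le_max_left _ _))
  calc dist x p / dist y p
      ≤ (t + dist y p) / dist y p := by gcongr; exact dist_triangle x y p
    _ = 1 + t / dist y p := by rw [add_div, add_comm, div_self (hy.trans_le hyp).ne']
    _ ≤ 1 + t / infDist y s := by gcongr
    _ = (t + infDist y s) / infDist y s := by rw [add_div, add_comm, div_self hy.ne']
    _ ≤ (t + M) / infDist y s := by gcongr; exact le_max_right _ _
    _ ≤ (t + M) / infDist y s * ((t + M) / infDist x s) :=
      le_mul_of_one_le_right (by positivity) hM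
    _ = (t + M) ^ 2 / (infDist x s * infDist y s) := by field_simp

theorem log_dist_div_dist_le_uMetric (hp : p ∈ s) (hx : 0 < infDist x s) (hy : 0 < infDist y s) :
    log (dist x p / dist y p) ≤ uMetric s x y := by
  have hxp : 0 < dist x p := hx.trans_le (infDist_le_dist_of_mem hp)
  have hyp : 0 < dist y p := hy.trans_le (infDist_le_dist_of_mem hp)
  rw [uMetric_eq_log]
  exact log_le_log (by positivity) (dist_div_dist_le hp hx hy)

theorem abs_log_dist_div_dist_le_uMetric (hp : p ∈ s) (hx : 0 < infDist x s)
    (hy : 0 < infDist y s) : |log (dist x p / dist y p)| ≤ uMetric s x y := by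
  refine abs_le.mpr ⟨?_, log_dist_div_dist_le_uMetric hp hx hy⟩
  rw [neg_le, ← log_inv, inv_div, uMetric_comm]
  exact log_dist_div_dist_le_uMetric hp hy hx

theorem halfApollonian_le_uMetric (hs : s.Nonempty) (hx : 0 < infDist x s)
    (hy : 0 < infDist y s) : halfApollonian s x y ≤ uMetric s x y :=
  have : Nonempty s := hs.to_subtype
  ciSup_le fun p => abs_log_dist_div_dist_le_uMetric p.2 hx hy

theorem abs_log_dist_div_dist_le_halfApollonian (hp : p ∈ s) (hx : 0 < infDist x s)
    (hy : 0 < infDist y s) : |log (dist x p / dist y p)| ≤ halfApollonian s x y :=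
  le_ciSup (f := fun p : s => |log (dist x p / dist y p)|)
    ⟨uMetric s x y, by rintro _ ⟨q, rfl⟩; exact abs_log_dist_div_dist_le_uMetric q.2 hx hy⟩ ⟨p, hp⟩

theorem dist_le_exp_halfApollonian_mul (hp : p ∈ s) (hx : 0 < infDist x s)
    (hy : 0 < infDist y s) : dist y p ≤ exp (halfApollonian s x y) * dist x p := by
  have hxp : 0 < dist x p := hx.trans_le (infDist_le_dist_of_mem hp)
  have hyp : 0 < dist y p := hy.trans_le (infDist_le_dist_of_mem hp)
  have h := (abs_le.mp (abs_log_dist_div_dist_le_halfApollonian hp hx hy)).1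
  rw [neg_le, ← log_inv, inv_div, log_le_iff_le_exp (by positivity), div_le_iff₀ hxp] at h
  exact h

theorem le_mul_infDist_of_forall {r c : ℝ} (hc : 0 < c) (hs : s.Nonempty)
    (h : ∀ p ∈ s, r ≤ c * dist x p) : r ≤ c * infDist x s := by
  rw [← div_le_iff₀' hc, le_infDist hs]
  exact fun p hp => (div_le_iff₀' hc).mpr (h p hp)

theorem infDist_le_exp_halfApollonian_mul (hs : s.Nonempty) (hx : 0 < infDist x s)
    (hy : 0 < infDist y s) : infDist y s ≤ exp (halfApollonian s x y) * infDist x s :=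
  le_mul_infDist_of_forall (exp_pos _) hs fun _ hp =>
    (infDist_le_dist_of_mem hp).trans (dist_le_exp_halfApollonian_mul hp hx hy)

theorem dist_le_one_add_exp_halfApollonian_mul (hs : s.Nonempty) (hx : 0 < infDist x s)
    (hy : 0 < infDist y s) : dist x y ≤ (1 + exp (halfApollonian s x y)) * infDist x s :=
  le_mul_infDist_of_forall (by positivity) hs fun p hp => by
    have := dist_le_exp_halfApollonian_mul hp hx hy
    linarith [dist_triangle_right x y p]

theorem add_max_sq_le {a b t E : ℝ} (ha : 0 < a) (hb : 0 < b) (ht : 0 ≤ t) (hE : 0 ≤ E)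
    (hba : b ≤ E * a) (hab : a ≤ E * b) (hta : t ≤ (1 + E) * a) (htb : t ≤ (1 + E) * b) :
    (t + max a b) ^ 2 ≤ (2 + E) ^ 4 * (a * b) := by
  have htM : 0 ≤ t + max a b := add_nonneg ht (ha.le.trans (le_max_left a b))
  have hsum : t + max a b ≤ (2 + E) * max a b := by
    rcases max_cases a b with ⟨h, -⟩ | ⟨h, -⟩ <;> rw [h] <;> linarith
  have hsq : max a b ^ 2 ≤ E * (a * b) := by
    rcases max_cases a b with ⟨h, -⟩ | ⟨h, -⟩ <;> rw [h] <;> nlinarith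
  calc (t + max a b) ^ 2
      ≤ ((2 + E) * max a b) ^ 2 := pow_le_pow_left₀ htM hsum 2
    _ = (2 + E) ^ 2 * max a b ^ 2 := mul_pow _ _ _
    _ ≤ (2 + E) ^ 2 * (E * (a * b)) := by gcongr
    _ ≤ (2 + E) ^ 2 * ((2 + E) ^ 2 * (a * b)) := by gcongr; nlinarith
    _ = (2 + E) ^ 4 * (a * b) := by ring

theorem uMetric_le_four_mul_log (hs : s.Nonempty) (hx : 0 < infDist x s)
    (hy : 0 < infDist y s) : uMetric s x y ≤ 4 * log (2 + exp (halfApollonian s x y)) := by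
  have hbound := add_max_sq_le hx hy dist_nonneg (exp_pos _).le
    (infDist_le_exp_halfApollonian_mul hs hx hy)
    (halfApollonian_comm s x y ▸ infDist_le_exp_halfApollonian_mul hs hy hx)
    (dist_le_one_add_exp_halfApollonian_mul hs hx hy)
    (dist_comm x y ▸ halfApollonian_comm s x y ▸ dist_le_one_add_exp_halfApollonian_mul hs hy hx)
  rw [uMetric_eq_log, show (4 : ℝ) = (4 : ℕ) by norm_num, ← log_pow]
  exact log_le_log (by positivity) ((div_le_iff₀ (by positivity)).mpr hbound)

end

theorem stmt19_general {n : ℕ} (D : Set (EuclideanSpace ℝ (Fin n)))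
    (hDopen : IsOpen D) (hDproper : D ≠ Set.univ)
    (d eta u : _)
    (hd : d = fun x => Metric.infDist x (frontier D))
    (heta : eta = fun x y => ⨆ p : frontier D,
      |Real.log (dist x (p : EuclideanSpace ℝ (Fin n)) / dist y (p : EuclideanSpace ℝ (Fin n)))|)
    (hu : u = fun x y => 2 * Real.log ((dist x y + max (d x) (d y)) / Real.sqrt (d x * d y)))
    (x y : EuclideanSpace ℝ (Fin n)) (hx : x ∈ D) (hy : y ∈ D) :
    eta x y ≤ u x y ∧ u x y ≤ 4 * Real.log (2 + Real.exp (eta x y)) := by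
  subst hd heta hu
  have hF : (frontier D).Nonempty := nonempty_frontier_iff.mpr ⟨⟨x, hx⟩, hDproper⟩
  have hpos : ∀ z ∈ D, 0 < infDist z (frontier D) := fun z hz =>
    (isClosed_frontier.notMem_iff_infDist_pos hF).mp fun h => (hDopen.frontier_eq ▸ h).2 hz
  exact ⟨halfApollonian_le_uMetric hF (hpos x hx) (hpos y hy),
    uMetric_le_four_mul_log hF (hpos x hx) (hpos y hy)⟩

/-- For any proper subdomain `D ⊊ ℝⁿ` and `x, y ∈ D`, the half-Apollonian metric
`η_D(x,y) = sup_{p ∈ ∂D} |log(|x−p|/|y−p|)|` and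
`u_D(x,y) = 2 log((|x−y| + max{d(x),d(y)})/√(d(x)d(y)))` satisfy
`η_D(x,y) ≤ u_D(x,y) ≤ 4 log(2 + e^{η_D(x,y)})`. -/
theorem stmt19 {n : ℕ} (D : Set (EuclideanSpace ℝ (Fin n)))
    (hDopen : IsOpen D) (hDconn : IsConnected D) (hDproper : D ≠ Set.univ)
    (d eta u : _)
    (hd : d = fun x => Metric.infDist x (frontier D))
    (heta : eta = fun x y => ⨆ p : frontier D,
      |Real.log (dist x (p : EuclideanSpace ℝ (Fin n)) / dist y (p : EuclideanSpace ℝ (Fin n)))|)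
    (hu : u = fun x y => 2 * Real.log ((dist x y + max (d x) (d y)) / Real.sqrt (d x * d y)))
    (x y : EuclideanSpace ℝ (Fin n)) (hx : x ∈ D) (hy : y ∈ D) :
    eta x y ≤ u x y ∧ u x y ≤ 4 * Real.log (2 + Real.exp (eta x y)) :=
  stmt19_general D hDopen hDproper d eta u hd heta hu x y hx hy
end
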